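/- Let [σ₁|τ₁] ∈ B_p and [σ₂|τ₂] ∈ B_q (p,q ≥ 1). If a basis element [σ₃|τ₃] has nonzero coefficient in the product [σ₁|τ₁] ⋆ [σ₂|τ₂] ∈ F_{p+q}, then σ₃ ⊆ σ₁ ∪ σ₂ and τ₃ ⊆ τ₁ ∪ τ₂. -/

import Mathlib

open Classical MvPolynomial Finsupp TensorProduct

set_option maxHeartbeats 1600000

noncomputable section

namespace EdgeRes

/-- A "cell" `(σ, τ)`: a pair of finite sets of vertices, representing the symbol `[σ|τ]`. -/
abbrev Cell (n : ℕ) := Finset (Fin n) × Finset (Fin n)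

/-- The cointerval graph of the intervals `[a i, b i]`: distinct vertices are adjacent
iff the corresponding closed intervals are disjoint. -/
def cigraph (n : ℕ) (a b : Fin n → ℝ) : SimpleGraph (Fin n) where
  Adj i j := i ≠ j ∧ Disjoint (Set.Icc (a i) (b i)) (Set.Icc (a j) (b j))
  symm := ⟨fun i j h => ⟨h.1.symm, h.2.symm⟩⟩
  loopless := ⟨fun i h => h.1 rfl⟩

variable {n : ℕ}

/-- The homological degree of a cell: `|σ| + |τ| - 1`. -/
def cellDeg (e : Cell n) : ℕ := e.1.card + e.2.card - 1

/-- `e = (σ, τ)` is a basis cell: either the degree-0 cell `(∅, ∅)` (representing `1 ∈ B₀`),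
or `σ, τ` are disjoint and nonempty, `max σ < min τ`, and every `i ∈ σ` is adjacent
to `min τ` in `G`. -/
def IsBasisCell (G : SimpleGraph (Fin n)) (e : Cell n) : Prop :=
  e = (∅, ∅) ∨
  (e.1.Nonempty ∧ e.2.Nonempty ∧ Disjoint e.1 e.2 ∧
   (∀ i ∈ e.1, ∀ j ∈ e.2, i < j) ∧
   (∀ i ∈ e.1, ∀ j ∈ e.2, (∀ j' ∈ e.2, j ≤ j') → G.Adj i j))

/-- `e ∈ B_d`. -/
def InB (G : SimpleGraph (Fin n)) (d : ℕ) (e : Cell n) : Prop :=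
  IsBasisCell G e ∧ cellDeg e = d

/-- The underlying module of the resolution: the free `S`-module on all cells (the
resolution `F` is the submodule family spanned by the basis cells of each degree). -/
abbrev Ftot (n : ℕ) (k : Type) [Field k] := Cell n →₀ MvPolynomial (Fin n) k

variable (G : SimpleGraph (Fin n)) (k : Type) [Field k]

/-- The basis vector corresponding to a cell, where symbols that are not genuine
basis elements are interpreted as `0`. -/
def sym (e : Cell n) : Ftot n k :=
  if IsBasisCell G e then Finsupp.single e 1 else 0

/-- The differential on a basis cell: `d[{i}|{j}] = x_i x_j`, and for `|σ|+|τ| ≥ 3`,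
`d[σ|τ] = Σ_{i∈σ} (−1)^{|τ|+|{j∈σ : j>i}|} x_i [σ∖i|τ] + Σ_{i∈τ} (−1)^{|{j∈τ : j>i}|} x_i [σ|τ∖i]`. -/
def diffCell (e : Cell n) : Ftot n k :=
  if IsBasisCell G e then
    if e.1.card + e.2.card = 2 then
      (∏ i ∈ e.1 ∪ e.2, (X i : MvPolynomial (Fin n) k)) • sym G k ((∅, ∅) : Cell n)
    else if 3 ≤ e.1.card + e.2.card then
      (∑ i ∈ e.1,
        (((-1 : MvPolynomial (Fin n) k) ^ (e.2.card + (e.1.filter fun j => i < j).card)) * X i) •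
          sym G k (e.1.erase i, e.2))
      + (∑ i ∈ e.2,
        (((-1 : MvPolynomial (Fin n) k) ^ ((e.2.filter fun j => i < j).card)) * X i) •
          sym G k (e.1, e.2.erase i))
    else 0
  else 0

/-- The differential, as an `S`-linear endomorphism of the total module (it is zero in
degree `0` and on non-basis cells). -/
def Dmap : Ftot n k →ₗ[MvPolynomial (Fin n) k] Ftot n k :=
  Finsupp.lsum ℕ fun e => LinearMap.smulRight LinearMap.id (diffCell G k e)

/-- The submodule `F_d`: the span of the basis cells in `B_d`.  (`F` is the direct sum of
these, and `F_0 = S·[∅|∅] ≅ S`.) -/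
def Fsub (d : ℕ) : Submodule (MvPolynomial (Fin n) k) (Ftot n k) :=
  Submodule.span _ {f : Ftot n k | ∃ e : Cell n, InB G d e ∧ f = Finsupp.single e 1}

/-- The edge ideal `I_G`, generated by the `x_i x_j` for edges `ij` of `G`. -/
def edgeIdeal : Ideal (MvPolynomial (Fin n) k) :=
  Ideal.span {m | ∃ i j : Fin n, G.Adj i j ∧ m = X i * X j}

/-- The irrelevant maximal ideal `(x_1, …, x_n)`. -/
def irrIdeal (n : ℕ) (k : Type) [Field k] : Ideal (MvPolynomial (Fin n) k) :=
  Ideal.span (Set.range fun i : Fin n => (X i : MvPolynomial (Fin n) k))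

/-- The set of pairs `(i, j)` with `i < j`, `ij ∈ E(G)`, and `x_i x_j ∣ x^α`; i.e. the
elements `[{i}|{j}]` of `B₁` whose monomial divides `x^α`. -/
def DvdSet (α : Fin n →₀ ℕ) : Finset (Fin n × Fin n) :=
  Finset.univ.filter fun p => p.1 < p.2 ∧ G.Adj p.1 p.2 ∧ 1 ≤ α p.1 ∧ 1 ≤ α p.2

/-- `c` on a monomial `x^α ∈ F_0 = S`: zero if `x^α ∉ I_G`; otherwise
`(x^α/(x_i x_j))·[{i}|{j}]` for the `≺`-minimal `[{i}|{j}] ∈ B₁` with `x_i x_j ∣ x^α`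
(i.e. `j` is largest possible and then `i` smallest possible). -/
def cZero (α : Fin n →₀ ℕ) : Ftot n k :=
  if h : (DvdSet G α).Nonempty then
    let t := ((DvdSet G α).image Prod.snd).max' (h.image _)
    if h2 : ((((DvdSet G α).filter fun p => p.2 = t)).image Prod.fst).Nonempty then
      let s := ((((DvdSet G α).filter fun p => p.2 = t)).image Prod.fst).min' h2
      (monomial (α - Finsupp.single s 1 - Finsupp.single t 1) (1 : k)) • sym G k ({s}, {t})
    else 0
  else 0

/-- `C₁ = {i ∈ supp α : i > max τ}`. -/
def C1set (τ : Finset (Fin n)) (α : Fin n →₀ ℕ) : Finset (Fin n) :=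
  α.support.filter fun i => ∀ j ∈ τ, j < i

/-- `C₂ = {i ∈ supp α : i < min σ, {i, min τ} ∈ E(G)}`. -/
def C2set (σ τ : Finset (Fin n)) (α : Fin n →₀ ℕ) : Finset (Fin n) :=
  α.support.filter fun i =>
    (∀ s ∈ σ, i < s) ∧ ∀ j ∈ τ, (∀ j' ∈ τ, j ≤ j') → G.Adj i j

/-- `C₃ = {i ∈ supp α : i < min σ, i < max supp α, {i, max supp α} ∈ E(G)}`. -/
def C3set (σ : Finset (Fin n)) (α : Fin n →₀ ℕ) : Finset (Fin n) :=
  α.support.filter fun i =>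
    (∀ s ∈ σ, i < s) ∧ ∀ m ∈ α.support, (∀ m' ∈ α.support, m' ≤ m) → (i < m ∧ G.Adj i m)

/-- The value of the contracting homotopy `c` on the `k`-basis vector `x^α·e`. -/
def cMono (e : Cell n) (α : Fin n →₀ ℕ) : Ftot n k :=
  if IsBasisCell G e then
    if hτ : e.2.Nonempty then
      if e.2.card = 1 then
        -- `τ = {t}`
        let t := e.2.max' hτ
        if h1 : (C1set e.2 α).Nonempty then
          let m1 := (C1set e.2 α).max' h1
          (monomial (α - Finsupp.single m1 1) (1 : k)) • sym G k (e.1, insert m1 e.2)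
          + (if h3 : (C3set G e.1 α).Nonempty then
              let m3 := (C3set G e.1 α).min' h3
              ((-1 : MvPolynomial (Fin n) k) ^ (e.1.card + 1)) •
                ((monomial (α + Finsupp.single t 1 - Finsupp.single m1 1 - Finsupp.single m3 1)
                    (1 : k)) • sym G k (insert m3 e.1, ({m1} : Finset (Fin n))))
            else 0)
        else
          if h2 : (C2set G e.1 e.2 α).Nonempty then
            let m2 := (C2set G e.1 e.2 α).min' h2
            ((-1 : MvPolynomial (Fin n) k) ^ (e.1.card + 1)) •
              ((monomial (α - Finsupp.single m2 1) (1 : k)) • sym G k (insert m2 e.1, e.2))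
          else 0
      else
        -- `|τ| ≥ 2`
        if h1 : (C1set e.2 α).Nonempty then
          let m1 := (C1set e.2 α).max' h1
          (monomial (α - Finsupp.single m1 1) (1 : k)) • sym G k (e.1, insert m1 e.2)
        else 0
    else cZero G k α  -- the degree-0 basis cell `(∅, ∅)`
  else 0

/-- The `k`-basis of the total module, indexed by pairs (cell, monomial exponent). -/
def FBasis (n : ℕ) (k : Type) [Field k] :
    Module.Basis ((_ : Cell n) × (Fin n →₀ ℕ)) k (Ftot n k) :=
  Finsupp.basis fun _ => MvPolynomial.basisMonomials (Fin n) k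

/-- The contracting homotopy `c`, as a `k`-linear endomorphism of the total module. -/
def Cmap : Ftot n k →ₗ[k] Ftot n k :=
  (FBasis n k).constr ℕ fun p => cMono G k p.1 p.2

/-- The `S`-bilinear extension of a map defined on pairs of cells. -/
def biext (b : Cell n → Cell n → Ftot n k) (f g : Ftot n k) : Ftot n k :=
  ∑ e₁ ∈ f.support, ∑ e₂ ∈ g.support, (f e₁ * g e₂) • b e₁ e₂

/-- The product of two basis cells, defined recursively (with fuel, which suffices as each
recursive step lowers the total degree): `1 ⋆ 1 = 1`, and for `p + q ≥ 1`,
`e₁ ⋆ e₂ = c((d e₁) ⋆ e₂) + (−1)^p c(e₁ ⋆ (d e₂))`. -/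
def bstar : ℕ → Cell n → Cell n → Ftot n k
  | 0, _, _ => 0
  | N + 1, e₁, e₂ =>
    if cellDeg e₁ + cellDeg e₂ = 0 then Finsupp.single ((∅, ∅) : Cell n) 1
    else
      Cmap G k (biext k (fun a b => bstar N a b) (Dmap G k (Finsupp.single e₁ 1)) (Finsupp.single e₂ 1))
      + ((-1 : MvPolynomial (Fin n) k) ^ cellDeg e₁) •
          Cmap G k (biext k (fun a b => bstar N a b) (Finsupp.single e₁ 1) (Dmap G k (Finsupp.single e₂ 1)))

/-- The product `⋆` on the resolution, extended `S`-bilinearly from basis cells. -/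
def pstar (f g : Ftot n k) : Ftot n k := biext k (bstar G k (4 * n + 4)) f g

/-- The map `∂` on a basis cell: `∂[{i}|{j}] = x_i x_j`, and for `|σ|+|τ| ≥ 3`,
`∂[σ|τ] = x_{max τ}[σ|τ∖max τ] − (−1)^{|τ|+|σ|} x_{min σ}[σ∖min σ|τ]`. -/
def partialCell (e : Cell n) : Ftot n k :=
  if IsBasisCell G e then
    if e.1.card + e.2.card = 2 then
      (∏ i ∈ e.1 ∪ e.2, (X i : MvPolynomial (Fin n) k)) • sym G k ((∅, ∅) : Cell n)
    else if 3 ≤ e.1.card + e.2.card then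
      if h1 : e.1.Nonempty then
        if h2 : e.2.Nonempty then
          (X (e.2.max' h2) : MvPolynomial (Fin n) k) • sym G k (e.1, e.2.erase (e.2.max' h2))
          - ((-1 : MvPolynomial (Fin n) k) ^ (e.2.card + e.1.card)) •
              ((X (e.1.min' h1) : MvPolynomial (Fin n) k) •
                sym G k (e.1.erase (e.1.min' h1), e.2))
        else 0
      else 0
    else 0
  else 0

/-- The map `∂`, as an `S`-linear endomorphism of the total module. -/
def Pmap : Ftot n k →ₗ[MvPolynomial (Fin n) k] Ftot n k :=
  Finsupp.lsum ℕ fun e => LinearMap.smulRight LinearMap.id (partialCell G k e)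

/-- The `k`-linear projection `π` of `S` fixing each monomial not in `I_G` and
annihilating each monomial in `I_G`. -/
def piMap : MvPolynomial (Fin n) k →ₗ[k] MvPolynomial (Fin n) k :=
  (MvPolynomial.basisMonomials (Fin n) k).constr ℕ fun α =>
    if monomial α (1 : k) ∈ edgeIdeal G k then 0 else monomial α (1 : k)

/-- The `ℕⁿ`-multidegree of the basis vector `x^α [σ|τ]`: `α + Σ_{i ∈ σ∪τ} eᵢ`. -/
def mdeg (e : Cell n) (α : Fin n →₀ ℕ) : Fin n →₀ ℕ :=
  α + ∑ i ∈ e.1 ∪ e.2, Finsupp.single i 1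

/-- The `μ`-homogeneous component of the resolution (as a `k`-subspace). -/
def Hsub (μ : Fin n →₀ ℕ) : Submodule k (Ftot n k) :=
  Submodule.span k {f : Ftot n k |
    ∃ (e : Cell n) (α : Fin n →₀ ℕ), IsBasisCell G e ∧ mdeg e α = μ ∧
      f = Finsupp.single e (monomial α (1 : k))}


/-!
Every term `x^α [σ|τ]` of `[σ₁|τ₁] ⋆ [σ₂|τ₂]` satisfies `σ ⊆ A₁ := σ₁ ∪ σ₂`, `τ ⊆ A₂ := τ₁ ∪ τ₂`
and `σ ∪ τ ∪ supp α = A₁ ∪ A₂`; this invariant is carried along the recursion defining `⋆`.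
The differential only moves vertices of a cell into the monomial, so it passes the invariant
up from the smaller pairs. The homotopy `c` moves one extremal vertex of `supp α` into `τ` (the
largest one, `m₁`) or into `σ` (`m₂`, `m₃`, or the pair `s < t` in degree `0`). Every vertex
of `A₁` lies below a vertex of `A₂`, and every vertex of `A₂` lies above a neighbour in `A₁`,
since neighbourhoods in a cointerval graph are closed upwards. As all of `A₁ ∪ A₂` is visible in
the term, the extremality of the moved vertex then forces it into the correct set.
-/

variable {G k}

def AllTerms (P : Cell n → (Fin n →₀ ℕ) → Prop) (f : Ftot n k) : Prop :=
  ∀ e α, coeff α (f e) ≠ 0 → P e α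

namespace AllTerms

variable {P Q : Cell n → (Fin n →₀ ℕ) → Prop} {f g : Ftot n k}

theorem zero : AllTerms P (0 : Ftot n k) := fun _ _ h => absurd rfl h

theorem add (hf : AllTerms P f) (hg : AllTerms P g) : AllTerms P (f + g) := by
  intro e α h
  rw [Finsupp.add_apply, coeff_add] at h
  by_cases hfe : coeff α (f e) = 0
  · exact hg e α (by simpa [hfe] using h)
  · exact hf e α hfe

theorem neg (hf : AllTerms P f) : AllTerms P (-f) := by
  intro e α h
  exact hf e α (by simpa using h)

theorem neg_one_pow_smul (hf : AllTerms P f) (m : ℕ) :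
    AllTerms P (((-1 : MvPolynomial (Fin n) k) ^ m) • f) := by
  rcases neg_one_pow_eq_or (MvPolynomial (Fin n) k) m with h | h <;> rw [h]
  · rwa [one_smul]
  · rw [neg_one_smul]; exact hf.neg

theorem const_smul (c : k) (hf : AllTerms P f) : AllTerms P (c • f) := by
  intro e α h
  rw [Finsupp.smul_apply, coeff_smul] at h
  exact hf e α (right_ne_zero_of_smul h)

theorem sum {ι : Type*} (s : Finset ι) {F : ι → Ftot n k} (hF : ∀ i ∈ s, AllTerms P (F i)) :
    AllTerms P (∑ i ∈ s, F i) := by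
  induction s using Finset.induction_on with
  | empty => simpa using zero
  | insert a s ha ih =>
    rw [Finset.sum_insert ha]
    exact (hF a (Finset.mem_insert_self a s)).add
      (ih fun i hi => hF i (Finset.mem_insert_of_mem hi))

theorem smul (p : MvPolynomial (Fin n) k) (hf : AllTerms P f)
    (h : ∀ e δ β, coeff δ p ≠ 0 → P e β → Q e (β + δ)) : AllTerms Q (p • f) := by
  intro e α hα
  rw [Finsupp.smul_apply, smul_eq_mul, coeff_mul] at hα
  obtain ⟨⟨δ, β⟩, hmem, hne⟩ := Finset.exists_ne_zero_of_sum_ne_zero hα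
  rw [Finset.HasAntidiagonal.mem_antidiagonal] at hmem
  rw [← hmem, add_comm]
  exact h e δ β (left_ne_zero_of_mul hne) (hf e β (right_ne_zero_of_mul hne))

end AllTerms

theorem allTerms_single_one {P : Cell n → (Fin n →₀ ℕ) → Prop} {e : Cell n} (h : P e 0) :
    AllTerms P (Finsupp.single e (1 : MvPolynomial (Fin n) k)) := by
  intro e' α hα
  rw [Finsupp.single_apply] at hα
  split_ifs at hα with he
  · rw [coeff_one] at hα
    split_ifs at hα with h0
    · rwa [← he, ← h0]
    · exact absurd rfl hα
  · exact absurd (coeff_zero α) hα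

theorem allTerms_sym {P : Cell n → (Fin n →₀ ℕ) → Prop} {e : Cell n}
    (h : IsBasisCell G e → P e 0) : AllTerms P (sym G k e) := by
  unfold sym
  split_ifs with he
  · exact allTerms_single_one (h he)
  · exact AllTerms.zero

theorem allTerms_monomial_smul_sym {P : Cell n → (Fin n →₀ ℕ) → Prop} {e : Cell n}
    {δ : Fin n →₀ ℕ} (h : IsBasisCell G e → P e δ) :
    AllTerms P (monomial δ (1 : k) • sym G k e) := by
  refine AllTerms.smul _ (allTerms_sym (P := fun e' β => IsBasisCell G e' ∧ e' = e ∧ β = 0)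
    fun he => ⟨he, rfl, rfl⟩) ?_
  rintro e' γ β hγ ⟨he, rfl, rfl⟩
  rw [coeff_monomial] at hγ
  split_ifs at hγ with hδ
  · rw [zero_add, ← hδ]; exact h he
  · exact absurd rfl hγ

def UpwardClosedAdj (G : SimpleGraph (Fin n)) : Prop :=
  ∀ ⦃x i j : Fin n⦄, x < i → i ≤ j → G.Adj x i → G.Adj x j

theorem cigraph_upwardClosedAdj {a b : Fin n → ℝ} (hab : ∀ i, a i ≤ b i)
    (hmono : ∀ i j : Fin n, i < j → a i ≤ a j) : UpwardClosedAdj (cigraph n a b) := by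
  rintro x i j hxi hij ⟨-, hdisj⟩
  have hbx : b x < a i := by
    by_contra! h
    exact Set.disjoint_left.mp hdisj ⟨hmono x i hxi, h⟩ ⟨le_rfl, hab i⟩
  have haij : a i ≤ a j := hij.lt_or_eq.elim (hmono i j) (fun h => h ▸ le_rfl)
  refine ⟨(hxi.trans_le hij).ne, Set.disjoint_left.mpr fun t ht ht' => ?_⟩
  linarith [ht.2, ht'.1]

def Linked (G : SimpleGraph (Fin n)) (A₁ A₂ : Finset (Fin n)) : Prop :=
  (∀ i ∈ A₁, ∃ j ∈ A₂, i < j) ∧ ∀ j ∈ A₂, ∃ i ∈ A₁, i < j ∧ G.Adj i j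

namespace Linked

variable {A₁ A₂ B₁ B₂ : Finset (Fin n)} {m : Fin n}

theorem union (hA : Linked G A₁ A₂) (hB : Linked G B₁ B₂) :
    Linked G (A₁ ∪ B₁) (A₂ ∪ B₂) := by
  constructor
  · simp only [Finset.mem_union]
    rintro i (hi | hi)
    · obtain ⟨j, hj, hij⟩ := hA.1 i hi; exact ⟨j, Or.inl hj, hij⟩
    · obtain ⟨j, hj, hij⟩ := hB.1 i hi; exact ⟨j, Or.inr hj, hij⟩
  · simp only [Finset.mem_union]
    rintro j (hj | hj)
    · obtain ⟨i, hi, hij⟩ := hA.2 j hj; exact ⟨i, Or.inl hi, hij⟩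
    · obtain ⟨i, hi, hij⟩ := hB.2 j hj; exact ⟨i, Or.inr hi, hij⟩

theorem mem_snd (hL : Linked G A₁ A₂) (hm : m ∈ A₁ ∪ A₂) (htop : ∀ j ∈ A₂, ¬ m < j) :
    m ∈ A₂ := by
  refine (Finset.mem_union.mp hm).resolve_left fun hm₁ => ?_
  obtain ⟨j, hj, hmj⟩ := hL.1 m hm₁
  exact htop j hj hmj

theorem mem_fst (hL : Linked G A₁ A₂) (hm : m ∈ A₁ ∪ A₂)
    (hbot : ∀ x ∈ A₁, x < m → ¬ G.Adj x m) : m ∈ A₁ := by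
  refine (Finset.mem_union.mp hm).resolve_right fun hm₂ => ?_
  obtain ⟨x, hx, hxm, hadj⟩ := hL.2 m hm₂
  exact hbot x hx hxm hadj

end Linked

theorem IsBasisCell.nonempty_fst {e : Cell n} (he : IsBasisCell G e) (hτ : e.2.Nonempty) :
    e.1.Nonempty := by
  rcases he with rfl | he
  · exact absurd hτ Finset.not_nonempty_empty
  · exact he.1

theorem IsBasisCell.fst_lt_snd {e : Cell n} (he : IsBasisCell G e) :
    ∀ i ∈ e.1, ∀ j ∈ e.2, i < j := by
  rcases he with rfl | he
  · simp
  · exact he.2.2.2.1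

theorem IsBasisCell.linked (hG : UpwardClosedAdj G) {e : Cell n} (he : IsBasisCell G e) :
    Linked G e.1 e.2 := by
  rcases he with rfl | ⟨⟨i, hi⟩, hτ, -, hlt, hadj⟩
  · simp [Linked]
  have hmin := e.2.min'_mem hτ
  refine ⟨fun i hi => ⟨_, hmin, hlt i hi _ hmin⟩, fun j hj => ⟨i, hi, hlt i hi j hj, ?_⟩⟩
  exact hG (hlt i hi _ hmin) (e.2.min'_le j hj)
    (hadj i hi _ hmin fun j' hj' => e.2.min'_le j' hj')

def Fits (A₁ A₂ : Finset (Fin n)) (e : Cell n) (α : Fin n →₀ ℕ) : Prop :=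
  e.1 ⊆ A₁ ∧ e.2 ⊆ A₂ ∧ e.1 ∪ e.2 ∪ α.support = A₁ ∪ A₂

theorem insert_support_tsub_single {α : Fin n →₀ ℕ} {m : Fin n} (hm : α m ≠ 0) :
    insert m (α - Finsupp.single m 1).support = α.support := by
  ext i
  by_cases hi : i = m
  · subst hi; simpa using hm
  · simp [hi]

namespace Fits

variable {A₁ A₂ : Finset (Fin n)} {e : Cell n} {α : Fin n →₀ ℕ} {m : Fin n}

theorem support_subset (h : Fits A₁ A₂ e α) : α.support ⊆ A₁ ∪ A₂ :=
  h.2.2 ▸ Finset.subset_union_right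

theorem mem_cell_or_support {i : Fin n} (h : Fits A₁ A₂ e α) (hi : i ∈ A₁ ∪ A₂) :
    i ∈ e.1 ∨ i ∈ e.2 ∨ α i ≠ 0 := by
  rw [← h.2.2] at hi
  simpa [or_assoc] using hi

theorem add_face {B₁ B₂ : Finset (Fin n)} {δ : Fin n →₀ ℕ} (h : Fits B₁ B₂ e α)
    (h₁ : B₁ ⊆ A₁) (h₂ : B₂ ⊆ A₂) (hδ : B₁ ∪ B₂ ∪ δ.support = A₁ ∪ A₂) :
    Fits A₁ A₂ e (α + δ) := by
  refine ⟨h.1.trans h₁, h.2.1.trans h₂, ?_⟩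
  rw [Finsupp.support_add_eq_union, ← hδ, ← h.2.2]
  ac_rfl

theorem insert_snd (h : Fits A₁ A₂ e α) (hm : α m ≠ 0) (hmA : m ∈ A₂) :
    Fits A₁ A₂ (e.1, insert m e.2) (α - Finsupp.single m 1) := by
  refine ⟨h.1, Finset.insert_subset hmA h.2.1, ?_⟩
  rw [← h.2.2, ← insert_support_tsub_single hm]
  simp only [Finset.union_insert, Finset.insert_union]

theorem insert_fst (h : Fits A₁ A₂ e α) (hm : α m ≠ 0) (hmA : m ∈ A₁) :
    Fits A₁ A₂ (insert m e.1, e.2) (α - Finsupp.single m 1) := by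
  refine ⟨Finset.insert_subset hmA h.1, h.2.1, ?_⟩
  rw [← h.2.2, ← insert_support_tsub_single hm]
  simp only [Finset.union_insert, Finset.insert_union]

theorem exchange {t m₁ m₃ : Fin n} (h : Fits A₁ A₂ e α) (he : e.2 = {t})
    (h₁ : α m₁ ≠ 0) (h₃ : α m₃ ≠ 0) (hne : m₁ ≠ m₃) (hm₁ : m₁ ∈ A₂) (hm₃ : m₃ ∈ A₁) :
    Fits A₁ A₂ (insert m₃ e.1, {m₁})
      (α + Finsupp.single t 1 - Finsupp.single m₁ 1 - Finsupp.single m₃ 1) := by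
  refine ⟨Finset.insert_subset hm₃ h.1, Finset.singleton_subset_iff.mpr hm₁, ?_⟩
  have h₁' : (α + Finsupp.single t 1 : Fin n →₀ ℕ) m₁ ≠ 0 := by simp [h₁]
  have h₃' : (α + Finsupp.single t 1 - Finsupp.single m₁ 1 : Fin n →₀ ℕ) m₃ ≠ 0 := by
    simp [h₃, Finsupp.single_apply, hne]
  have key := insert_support_tsub_single h₁'
  rw [← insert_support_tsub_single h₃', Finsupp.support_add_eq_union,
    Finsupp.support_single t one_ne_zero] at key
  rw [← h.2.2, he]
  ext i
  have hi := Finset.ext_iff.mp key i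
  simp only [Finset.mem_union, Finset.mem_insert, Finset.mem_singleton] at hi ⊢
  tauto

theorem cZero_term {s t : Fin n} (h : Fits A₁ A₂ (∅, ∅) α) (hs : α s ≠ 0) (ht : α t ≠ 0)
    (hst : s ≠ t) (hsA : s ∈ A₁) (htA : t ∈ A₂) :
    Fits A₁ A₂ ({s}, {t}) (α - Finsupp.single s 1 - Finsupp.single t 1) := by
  have ht' : (α - Finsupp.single s 1 : Fin n →₀ ℕ) t ≠ 0 := by simp [ht, hst]
  simpa using (h.insert_fst hs hsA).insert_snd ht' htA

end Fits

section Pivots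

variable {A₁ A₂ : Finset (Fin n)} {e : Cell n} {α : Fin n →₀ ℕ}

theorem mem_C1set {τ : Finset (Fin n)} {i : Fin n} :
    i ∈ C1set τ α ↔ α i ≠ 0 ∧ ∀ j ∈ τ, j < i := by
  rw [C1set, Finset.mem_filter, Finsupp.mem_support_iff]

theorem mem_C2set {σ τ : Finset (Fin n)} {i : Fin n} :
    i ∈ C2set G σ τ α ↔
      α i ≠ 0 ∧ (∀ s ∈ σ, i < s) ∧ ∀ j ∈ τ, (∀ j' ∈ τ, j ≤ j') → G.Adj i j := by
  rw [C2set, Finset.mem_filter, Finsupp.mem_support_iff]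

theorem mem_C3set {σ : Finset (Fin n)} {i : Fin n} :
    i ∈ C3set G σ α ↔ α i ≠ 0 ∧ (∀ s ∈ σ, i < s) ∧
      ∀ m ∈ α.support, (∀ m' ∈ α.support, m' ≤ m) → i < m ∧ G.Adj i m := by
  rw [C3set, Finset.mem_filter, Finsupp.mem_support_iff]

theorem max'_C1set_mem (hL : Linked G A₁ A₂) (h : Fits A₁ A₂ e α) (hb : IsBasisCell G e)
    (hτ : e.2.Nonempty) (h1 : (C1set e.2 α).Nonempty) : (C1set e.2 α).max' h1 ∈ A₂ := by
  have hm := (C1set e.2 α).max'_mem h1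
  rw [mem_C1set] at hm
  refine hL.mem_snd (h.support_subset (Finsupp.mem_support_iff.mpr hm.1)) fun j hj hmj => ?_
  obtain ⟨t, ht⟩ := hτ
  rcases h.mem_cell_or_support (Finset.mem_union_right _ hj) with hjσ | hjτ | hjα
  · exact lt_asymm (hb.fst_lt_snd j hjσ t ht) ((hm.2 t ht).trans hmj)
  · exact lt_asymm (hm.2 j hjτ) hmj
  · refine not_le_of_gt hmj ((C1set e.2 α).le_max' j ?_)
    rw [mem_C1set]
    exact ⟨hjα, fun x hx => (hm.2 x hx).trans hmj⟩

theorem min'_C2set_mem (hG : UpwardClosedAdj G) (hL : Linked G A₁ A₂) (h : Fits A₁ A₂ e α)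
    (hb : IsBasisCell G e) (hτ : e.2.Nonempty) (h2 : (C2set G e.1 e.2 α).Nonempty) :
    (C2set G e.1 e.2 α).min' h2 ∈ A₁ := by
  have hm := (C2set G e.1 e.2 α).min'_mem h2
  rw [mem_C2set] at hm
  obtain ⟨s, hs⟩ := hb.nonempty_fst hτ
  refine hL.mem_fst (h.support_subset (Finsupp.mem_support_iff.mpr hm.1))
    fun x hx hxm hadj => ?_
  rcases h.mem_cell_or_support (Finset.mem_union_left _ hx) with hxσ | hxτ | hxα
  · exact lt_asymm (hm.2.1 x hxσ) hxm
  · exact lt_asymm ((hm.2.1 s hs).trans (hb.fst_lt_snd s hs x hxτ)) hxm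
  · refine not_le_of_gt hxm ((C2set G e.1 e.2 α).min'_le x ?_)
    rw [mem_C2set]
    exact ⟨hxα, fun s' hs' => hxm.trans (hm.2.1 s' hs'),
      fun j hj _ => hG hxm ((hm.2.1 s hs).trans (hb.fst_lt_snd s hs j hj)).le hadj⟩

theorem min'_C3set_mem (hG : UpwardClosedAdj G) (hL : Linked G A₁ A₂) (h : Fits A₁ A₂ e α)
    (hb : IsBasisCell G e) (hτ : e.2.Nonempty) (h3 : (C3set G e.1 α).Nonempty) :
    (C3set G e.1 α).min' h3 ∈ A₁ := by
  have hm := (C3set G e.1 α).min'_mem h3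
  rw [mem_C3set] at hm
  obtain ⟨s, hs⟩ := hb.nonempty_fst hτ
  refine hL.mem_fst (h.support_subset (Finsupp.mem_support_iff.mpr hm.1))
    fun x hx hxm hadj => ?_
  rcases h.mem_cell_or_support (Finset.mem_union_left _ hx) with hxσ | hxτ | hxα
  · exact lt_asymm (hm.2.1 x hxσ) hxm
  · exact lt_asymm ((hm.2.1 s hs).trans (hb.fst_lt_snd s hs x hxτ)) hxm
  · refine not_le_of_gt hxm ((C3set G e.1 α).min'_le x ?_)
    rw [mem_C3set]
    exact ⟨hxα, fun s' hs' => hxm.trans (hm.2.1 s' hs'), fun M hM hmax =>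
      ⟨hxm.trans (hm.2.2 M hM hmax).1, hG hxm (hm.2.2 M hM hmax).1.le hadj⟩⟩

end Pivots

theorem mem_DvdSet {α : Fin n →₀ ℕ} {p : Fin n × Fin n} :
    p ∈ DvdSet G α ↔ p.1 < p.2 ∧ G.Adj p.1 p.2 ∧ α p.1 ≠ 0 ∧ α p.2 ≠ 0 := by
  simp [DvdSet, Nat.one_le_iff_ne_zero]

theorem cZero_allTerms (hG : UpwardClosedAdj G) {A₁ A₂ : Finset (Fin n)}
    (hL : Linked G A₁ A₂) {α : Fin n →₀ ℕ} (h : Fits A₁ A₂ (∅, ∅) α) :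
    AllTerms (Fits A₁ A₂) (cZero G k α) := by
  unfold cZero
  split_ifs with hD
  · dsimp only
    set t := ((DvdSet G α).image Prod.snd).max' (hD.image _)
    split_ifs with hD'
    · set s := (((DvdSet G α).filter fun p => p.2 = t).image Prod.fst).min' hD'
      have hst : (s, t) ∈ DvdSet G α := by
        obtain ⟨p, hp, hps⟩ := Finset.mem_image.mp (Finset.min'_mem _ hD')
        rw [Finset.mem_filter] at hp
        exact (Prod.ext hps hp.2 : p = (s, t)) ▸ hp.1
      obtain ⟨hlt, hadj, hαs, hαt⟩ := mem_DvdSet.mp hst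
      have hα : ∀ i ∈ A₁ ∪ A₂, α i ≠ 0 := fun i hi => by simpa using h.mem_cell_or_support hi
      have htA : t ∈ A₂ := by
        refine hL.mem_snd (h.support_subset (Finsupp.mem_support_iff.mpr hαt))
          fun j hj htj => not_le_of_gt htj (Finset.le_max' _ j ?_)
        refine Finset.mem_image.mpr ⟨(s, j), ?_, rfl⟩
        exact mem_DvdSet.mpr
          ⟨hlt.trans htj, hG hlt htj.le hadj, hαs, hα j (Finset.mem_union_right _ hj)⟩
      have hsA : s ∈ A₁ := by
        refine hL.mem_fst (h.support_subset (Finsupp.mem_support_iff.mpr hαs))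
          fun x hx hxs hadjx => not_le_of_gt hxs (Finset.min'_le _ x ?_)
        refine Finset.mem_image.mpr ⟨(x, t), Finset.mem_filter.mpr ⟨?_, rfl⟩, rfl⟩
        exact mem_DvdSet.mpr
          ⟨hxs.trans hlt, hG hxs hlt.le hadjx, hα x (Finset.mem_union_left _ hx), hαt⟩
      exact allTerms_monomial_smul_sym fun _ => h.cZero_term hαs hαt hlt.ne hsA htA
    · exact AllTerms.zero
  · exact AllTerms.zero

section Homotopy

variable {A₁ A₂ : Finset (Fin n)} {e : Cell n} {α : Fin n →₀ ℕ}

theorem allTerms_C1set_term (hL : Linked G A₁ A₂) (h : Fits A₁ A₂ e α) (hb : IsBasisCell G e)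
    (hτ : e.2.Nonempty) (h1 : (C1set e.2 α).Nonempty) :
    AllTerms (Fits A₁ A₂) (monomial (α - Finsupp.single ((C1set e.2 α).max' h1) 1) (1 : k) •
      sym G k (e.1, insert ((C1set e.2 α).max' h1) e.2)) :=
  allTerms_monomial_smul_sym fun _ =>
    h.insert_snd (mem_C1set.mp (Finset.max'_mem _ h1)).1 (max'_C1set_mem hL h hb hτ h1)

theorem cMono_allTerms (hG : UpwardClosedAdj G) (hL : Linked G A₁ A₂) (h : Fits A₁ A₂ e α) :
    AllTerms (Fits A₁ A₂) (cMono G k e α) := by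
  unfold cMono
  dsimp only
  split_ifs with hb hτ hcard h1 h3 h2 h1
  · refine (allTerms_C1set_term hL h hb hτ h1).add
      (AllTerms.neg_one_pow_smul (allTerms_monomial_smul_sym fun _ => ?_) _)
    have hm₁ := mem_C1set.mp (Finset.max'_mem _ h1)
    have hm₃ := mem_C3set.mp (Finset.min'_mem _ h3)
    have ht := e.2.max'_mem hτ
    obtain ⟨s, hs⟩ := hb.nonempty_fst hτ
    have hτt : e.2 = {e.2.max' hτ} := Finset.eq_singleton_iff_unique_mem.mpr
      ⟨ht, fun x hx => Finset.card_le_one.mp hcard.le x hx _ ht⟩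
    refine h.exchange hτt hm₁.1 hm₃.1 ?_ (max'_C1set_mem hL h hb hτ h1)
      (min'_C3set_mem hG hL h hb hτ h3)
    exact (((hm₃.2.1 s hs).trans (hb.fst_lt_snd s hs _ ht)).trans (hm₁.2 _ ht)).ne'
  · rw [add_zero]
    exact allTerms_C1set_term hL h hb hτ h1
  · refine AllTerms.neg_one_pow_smul (allTerms_monomial_smul_sym fun _ => ?_) _
    exact h.insert_fst (mem_C2set.mp (Finset.min'_mem _ h2)).1 (min'_C2set_mem hG hL h hb hτ h2)
  · exact AllTerms.zero
  · exact allTerms_C1set_term hL h hb hτ h1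
  · exact AllTerms.zero
  · rcases hb with rfl | hb
    · exact cZero_allTerms hG hL h
    · exact absurd hb.2.1 hτ
  · exact AllTerms.zero

end Homotopy

theorem Cmap_allTerms {P Q : Cell n → (Fin n →₀ ℕ) → Prop} {f : Ftot n k}
    (hf : AllTerms P f) (hc : ∀ e α, P e α → AllTerms Q (cMono G k e α)) :
    AllTerms Q (Cmap G k f) := by
  rw [Cmap, Module.Basis.constr_apply, Finsupp.sum]
  refine AllTerms.sum _ fun p hp => (hc p.1 p.2 (hf p.1 p.2 ?_)).const_smul _
  rwa [Finsupp.mem_support_iff, FBasis, Finsupp.basis_repr] at hp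

def IsFace (e e' : Cell n) (δ : Fin n →₀ ℕ) : Prop :=
  e'.1 ⊆ e.1 ∧ e'.2 ⊆ e.2 ∧ e'.1 ∪ e'.2 ∪ δ.support = e.1 ∪ e.2

theorem support_sum_single_one (s : Finset (Fin n)) :
    (∑ i ∈ s, Finsupp.single i 1 : Fin n →₀ ℕ).support = s := by
  induction s using Finset.induction_on with
  | empty => simp
  | insert a s ha ih =>
    rw [Finset.sum_insert ha, Finsupp.support_add_eq_union, ih,
      Finsupp.support_single a one_ne_zero, Finset.insert_eq]

theorem diffCell_allTerms (e : Cell n) :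
    AllTerms (fun e' δ => IsBasisCell G e' ∧ IsFace e e' δ) (diffCell G k e) := by
  have hX (i : Fin n) : (X i : MvPolynomial (Fin n) k) = monomial (Finsupp.single i 1) 1 := rfl
  unfold diffCell
  split_ifs
  · rw [Finset.prod_congr rfl fun i _ => hX i, ← monomial_sum_one]
    exact allTerms_monomial_smul_sym fun hb =>
      ⟨hb, Finset.empty_subset _, Finset.empty_subset _, by simp [support_sum_single_one]⟩
  · refine (AllTerms.sum _ fun i hi => ?_).add (AllTerms.sum _ fun i hi => ?_) <;>
      rw [mul_smul, hX] <;>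
      refine AllTerms.neg_one_pow_smul (allTerms_monomial_smul_sym fun hb => ⟨hb, ?_⟩) _
    · refine ⟨Finset.erase_subset _ _, subset_rfl, ?_⟩
      rw [Finsupp.support_single i one_ne_zero, Finset.union_right_comm,
        Finset.union_comm _ {i}, ← Finset.insert_eq, Finset.insert_erase hi]
    · refine ⟨subset_rfl, Finset.erase_subset _ _, ?_⟩
      rw [Finsupp.support_single i one_ne_zero, Finset.union_assoc,
        Finset.union_comm _ {i}, ← Finset.insert_eq, Finset.insert_erase hi]
  · exact AllTerms.zero
  · exact AllTerms.zero

theorem IsFace.fits_union {e e' c x : Cell n} {δ β : Fin n →₀ ℕ} (hF : IsFace e e' δ)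
    (h : Fits (e'.1 ∪ c.1) (e'.2 ∪ c.2) x β) : Fits (e.1 ∪ c.1) (e.2 ∪ c.2) x (β + δ) := by
  obtain ⟨h₁, h₂, hδ⟩ := hF
  refine h.add_face (Finset.union_subset_union_left h₁) (Finset.union_subset_union_left h₂) ?_
  ext i
  have hi := Finset.ext_iff.mp hδ i
  simp only [Finset.mem_union] at hi ⊢
  tauto

theorem allTerms_diffCell_smul {e e' c : Cell n} {g : Ftot n k}
    (hg : IsBasisCell G e' → AllTerms (Fits (e'.1 ∪ c.1) (e'.2 ∪ c.2)) g) :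
    AllTerms (Fits (e.1 ∪ c.1) (e.2 ∪ c.2)) (diffCell G k e e' • g) := by
  by_cases he' : diffCell G k e e' = 0
  · rw [he', zero_smul]; exact AllTerms.zero
  obtain ⟨δ, hδ⟩ := MvPolynomial.ne_zero_iff.mp he'
  refine AllTerms.smul _ (hg (diffCell_allTerms e e' δ hδ).1) fun x δ β hδ hx => ?_
  exact (diffCell_allTerms e e' δ hδ).2.fits_union hx

theorem Dmap_single (e : Cell n) : Dmap G k (Finsupp.single e 1) = diffCell G k e := by
  rw [Dmap, Finsupp.lsum_single, LinearMap.smulRight_apply, LinearMap.id_apply, one_smul]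

theorem biext_single_left (b : Cell n → Cell n → Ftot n k) (e₁ : Cell n) (g : Ftot n k) :
    biext k b (Finsupp.single e₁ 1) g = ∑ e₂ ∈ g.support, g e₂ • b e₁ e₂ := by
  simp [biext]

theorem biext_single_right (b : Cell n → Cell n → Ftot n k) (f : Ftot n k) (e₂ : Cell n) :
    biext k b f (Finsupp.single e₂ 1) = ∑ e₁ ∈ f.support, f e₁ • b e₁ e₂ := by
  simp [biext]

theorem IsBasisCell.eq_empty_of_cellDeg_eq_zero {e : Cell n} (he : IsBasisCell G e)
    (h : cellDeg e = 0) : e = (∅, ∅) := by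
  rcases he with he | ⟨hσ, hτ, -⟩
  · exact he
  · have := hσ.card_pos; have := hτ.card_pos
    unfold cellDeg at h
    omega

theorem bstar_allTerms (hG : UpwardClosedAdj G) (N : ℕ) {e₁ e₂ : Cell n}
    (hb₁ : IsBasisCell G e₁) (hb₂ : IsBasisCell G e₂) :
    AllTerms (Fits (e₁.1 ∪ e₂.1) (e₁.2 ∪ e₂.2)) (bstar G k N e₁ e₂) := by
  induction N generalizing e₁ e₂ with
  | zero => exact AllTerms.zero
  | succ N ih =>
    rw [bstar]
    split_ifs with hdeg
    · rw [hb₁.eq_empty_of_cellDeg_eq_zero (by omega), hb₂.eq_empty_of_cellDeg_eq_zero (by omega)]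
      exact allTerms_single_one (by simp [Fits])
    have hL := (hb₁.linked hG).union (hb₂.linked hG)
    refine (Cmap_allTerms ?_ fun _ _ h => cMono_allTerms hG hL h).add
      (AllTerms.neg_one_pow_smul (Cmap_allTerms ?_ fun _ _ h => cMono_allTerms hG hL h) _)
    · rw [Dmap_single, biext_single_right]
      exact AllTerms.sum _ fun e' _ => allTerms_diffCell_smul fun hb' => ih hb' hb₂
    · rw [Dmap_single, biext_single_left, Finset.union_comm e₁.1, Finset.union_comm e₁.2]
      refine AllTerms.sum _ fun e' _ => allTerms_diffCell_smul fun hb' => ?_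
      rw [Finset.union_comm e'.1, Finset.union_comm e'.2]
      exact ih hb₁ hb'

theorem stmt12_general (n : ℕ) (a b : Fin n → ℝ)
    (hab : ∀ i, a i ≤ b i) (hmono : ∀ i j : Fin n, i < j → a i ≤ a j)
    (k : Type) [Field k]
    (p q : ℕ) (e₁ e₂ : Cell n)
    (h1 : InB (cigraph n a b) p e₁) (h2 : InB (cigraph n a b) q e₂)
    (e₃ : Cell n)
    (hne : pstar (cigraph n a b) k (Finsupp.single e₁ 1) (Finsupp.single e₂ 1) e₃ ≠ 0) :
    e₃.1 ⊆ e₁.1 ∪ e₂.1 ∧ e₃.2 ⊆ e₁.2 ∪ e₂.2 := by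
  rw [pstar, biext_single_left, Finsupp.support_single _ one_ne_zero,
    Finset.sum_singleton, Finsupp.single_eq_same, one_smul] at hne
  obtain ⟨α, hα⟩ := MvPolynomial.ne_zero_iff.mp hne
  obtain ⟨hσ, hτ, -⟩ :=
    bstar_allTerms (cigraph_upwardClosedAdj hab hmono) _ h1.1 h2.1 e₃ α hα
  exact ⟨hσ, hτ⟩

theorem stmt12 (n : ℕ) (hn : 1 ≤ n) (a b : Fin n → ℝ)
    (hab : ∀ i, a i ≤ b i) (hmono : ∀ i j : Fin n, i < j → a i ≤ a j)
    (k : Type) [Field k]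
    (p q : ℕ) (hp : 1 ≤ p) (hq : 1 ≤ q) (e₁ e₂ : Cell n)
    (h1 : InB (cigraph n a b) p e₁) (h2 : InB (cigraph n a b) q e₂)
    (e₃ : Cell n) (h3 : IsBasisCell (cigraph n a b) e₃)
    (hne : pstar (cigraph n a b) k (Finsupp.single e₁ 1) (Finsupp.single e₂ 1) e₃ ≠ 0) :
    e₃.1 ⊆ e₁.1 ∪ e₂.1 ∧ e₃.2 ⊆ e₁.2 ∪ e₂.2 :=
  stmt12_general n a b hab hmono k p q e₁ e₂ h1 h2 e₃ hne

end EdgeRes
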